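/- Let C be a real symmetric positive definite 2N×2N matrix. Then both I_{2N} + Γ(C) and I_{2N} − Γ(C) are positive definite; equivalently, every eigenvalue of Γ(C) lies in the open interval (−1, 1). -/

import Mathlib

open Matrix Polynomial

/-- The proper part `Ċ` of a real `2N × 2N` matrix `C` with blocks `[[A, B],[B′, D]]`:
`Ċ = (1/2)·[[A+D, B−B′],[B′−B, A+D]]`. -/
noncomputable def dotPart {N : ℕ} (C : Matrix (Fin N ⊕ Fin N) (Fin N ⊕ Fin N) ℝ) :
    Matrix (Fin N ⊕ Fin N) (Fin N ⊕ Fin N) ℝ :=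
  (1/2 : ℝ) • Matrix.fromBlocks (C.toBlocks₁₁ + C.toBlocks₂₂) (C.toBlocks₁₂ - C.toBlocks₂₁)
    (C.toBlocks₂₁ - C.toBlocks₁₂) (C.toBlocks₁₁ + C.toBlocks₂₂)

/-- The improper part `C̈ = C − Ċ`. -/
noncomputable def ddotPart {N : ℕ} (C : Matrix (Fin N ⊕ Fin N) (Fin N ⊕ Fin N) ℝ) :
    Matrix (Fin N ⊕ Fin N) (Fin N ⊕ Fin N) ℝ :=
  C - dotPart C

/-- `Γ(C) = Ċ^{-1/2} C̈ Ċ^{-1/2}`, where `Ċ^{1/2}` is the (unique) positive semidefinite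
(hence, as `Ċ` is positive definite, the unique symmetric positive definite) square root
of `Ċ`, given a proof `h` that `Ċ` is positive definite. -/
noncomputable def Gamma {N : ℕ} (C : Matrix (Fin N ⊕ Fin N) (Fin N ⊕ Fin N) ℝ)
    (h : (dotPart C).PosDef) : Matrix (Fin N ⊕ Fin N) (Fin N ⊕ Fin N) ℝ :=
  ((h.posSemidef.1.eigenvectorUnitary : Matrix (Fin N ⊕ Fin N) (Fin N ⊕ Fin N) ℝ) *
      diagonal ((RCLike.ofReal : ℝ → ℝ) ∘ (√·) ∘ h.posSemidef.1.eigenvalues) *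
      (star h.posSemidef.1.eigenvectorUnitary : Matrix (Fin N ⊕ Fin N) (Fin N ⊕ Fin N) ℝ))⁻¹ *
    ddotPart C *
    ((h.posSemidef.1.eigenvectorUnitary : Matrix (Fin N ⊕ Fin N) (Fin N ⊕ Fin N) ℝ) *
      diagonal ((RCLike.ofReal : ℝ → ℝ) ∘ (√·) ∘ h.posSemidef.1.eigenvalues) *
      (star h.posSemidef.1.eigenvectorUnitary : Matrix (Fin N ⊕ Fin N) (Fin N ⊕ Fin N) ℝ))⁻¹

/-!
Write `S = Ċ^{1/2}`. Since `S⁻¹ Ċ S⁻¹ = 1`, we get `1 ± Γ(C) = S⁻¹ (Ċ ± C̈) S⁻¹`. Here `Ċ + C̈ = C`,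
and `Ċ − C̈ = 2Ċ − C = J C Jᵀ` for the symplectic matrix `J = [[0, −1], [1, 0]]`. Both are
congruent to `C`, hence positive definite, and congruence by the invertible symmetric matrix
`S⁻¹` preserves positive definiteness.
-/

open scoped MatrixOrder ComplexOrder

namespace Matrix

variable {n 𝕜 : Type*} [Fintype n] [DecidableEq n] [RCLike 𝕜]

lemma PosDef.sqrt_inv_mul_self_mul_sqrt_inv {A : Matrix n n 𝕜} (hA : A.PosDef) :
    (CFC.sqrt A)⁻¹ * A * (CFC.sqrt A)⁻¹ = 1 := by
  have hSS : CFC.sqrt A * CFC.sqrt A = A := CFC.sqrt_mul_sqrt_self A hA.posSemidef.nonneg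
  have hS : IsUnit (CFC.sqrt A).det :=
    (isUnit_iff_isUnit_det _).mp hA.isStrictlyPositive.isUnit_cfcSqrt
  set S := CFC.sqrt A
  rw [← hSS, ← mul_assoc, nonsing_inv_mul S hS, one_mul, mul_nonsing_inv S hS]

lemma PosDef.sqrt_inv_mul_mul_sqrt_inv {A M : Matrix n n 𝕜} (hA : A.PosDef) (hM : M.PosDef) :
    ((CFC.sqrt A)⁻¹ * M * (CFC.sqrt A)⁻¹).PosDef := by
  have hT : ((CFC.sqrt A)⁻¹).PosDef := (hA.isStrictlyPositive.sqrt).posDef.inv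
  simpa only [hT.isHermitian.eq] using
    hM.conjTranspose_mul_mul_same (mulVec_injective_iff_isUnit.mpr hT.isUnit)

lemma PosSemidef.eigenvectorUnitary_mul_diagonal_sqrt_mul_star {A : Matrix n n 𝕜}
    (hA : A.PosSemidef) :
    (hA.1.eigenvectorUnitary : Matrix n n 𝕜) * diagonal (RCLike.ofReal ∘ (√·) ∘ hA.1.eigenvalues) *
      (star hA.1.eigenvectorUnitary : Matrix n n 𝕜) = CFC.sqrt A := by
  rw [CFC.sqrt_eq_real_sqrt A hA.nonneg, cfcₙ_eq_cfc, hA.1.cfc_eq, IsHermitian.cfc,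
    Unitary.conjStarAlgAut_apply]

lemma PosDef.J_mul_mul_conjTranspose_J {l R : Type*} [Fintype l] [DecidableEq l] [CommRing R]
    [PartialOrder R] [StarRing R] {A : Matrix (l ⊕ l) (l ⊕ l) R} (hA : A.PosDef) :
    (J l R * A * (J l R)ᴴ).PosDef :=
  hA.mul_mul_conjTranspose_same <| vecMul_injective_of_isUnit <|
    (isUnit_iff_isUnit_det _).mpr (isUnit_det_J l R)

end Matrix

section Gamma

variable {N : ℕ} (C : Matrix (Fin N ⊕ Fin N) (Fin N ⊕ Fin N) ℝ)

lemma dotPart_sub_ddotPart : dotPart C - ddotPart C = J (Fin N) ℝ * C * (J (Fin N) ℝ)ᴴ := by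
  obtain ⟨A, B, B', D, rfl⟩ : ∃ A B B' D, C = fromBlocks A B B' D :=
    ⟨_, _, _, _, (fromBlocks_toBlocks C).symm⟩
  simp only [ddotPart, dotPart, J, conjTranspose_eq_transpose_of_trivial, fromBlocks_transpose,
    fromBlocks_multiply, toBlocks_fromBlocks₁₁, toBlocks_fromBlocks₁₂, toBlocks_fromBlocks₂₁,
    toBlocks_fromBlocks₂₂, fromBlocks_smul, sub_eq_add_neg, fromBlocks_neg, fromBlocks_add,
    fromBlocks_inj, transpose_zero, transpose_neg, transpose_one, zero_mul, mul_zero, one_mul,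
    mul_one, neg_mul, mul_neg, zero_add, add_zero]
  refine ⟨?_, ?_, ?_, ?_⟩ <;> module

variable {C} (h : (dotPart C).PosDef)

lemma Gamma_eq_sqrt_inv_mul_mul_sqrt_inv :
    Gamma C h = (CFC.sqrt (dotPart C))⁻¹ * ddotPart C * (CFC.sqrt (dotPart C))⁻¹ := by
  rw [Gamma, h.posSemidef.eigenvectorUnitary_mul_diagonal_sqrt_mul_star]

lemma one_add_Gamma_eq :
    1 + Gamma C h = (CFC.sqrt (dotPart C))⁻¹ * C * (CFC.sqrt (dotPart C))⁻¹ := by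
  rw [Gamma_eq_sqrt_inv_mul_mul_sqrt_inv, ← h.sqrt_inv_mul_self_mul_sqrt_inv, ← add_mul,
    ← mul_add, ddotPart, add_sub_cancel]

lemma one_sub_Gamma_eq : 1 - Gamma C h =
    (CFC.sqrt (dotPart C))⁻¹ * (J (Fin N) ℝ * C * (J (Fin N) ℝ)ᴴ) * (CFC.sqrt (dotPart C))⁻¹ := by
  rw [Gamma_eq_sqrt_inv_mul_mul_sqrt_inv, ← h.sqrt_inv_mul_self_mul_sqrt_inv, ← sub_mul,
    ← mul_sub, dotPart_sub_ddotPart]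

end Gamma

theorem statement5_general (N : ℕ) (C : Matrix (Fin N ⊕ Fin N) (Fin N ⊕ Fin N) ℝ)
    (hC : C.PosDef) (hd : (dotPart C).PosDef) :
    (1 + Gamma C hd).PosDef ∧ (1 - Gamma C hd).PosDef := by
  rw [one_add_Gamma_eq, one_sub_Gamma_eq]
  exact ⟨hd.sqrt_inv_mul_mul_sqrt_inv hC, hd.sqrt_inv_mul_mul_sqrt_inv hC.J_mul_mul_conjTranspose_J⟩

theorem statement5 (N : ℕ) (hN : 1 ≤ N) (C : Matrix (Fin N ⊕ Fin N) (Fin N ⊕ Fin N) ℝ)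
    (hC : C.PosDef) (hd : (dotPart C).PosDef) :
    (1 + Gamma C hd).PosDef ∧ (1 - Gamma C hd).PosDef :=
  statement5_general N C hC hd
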